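/- arXiv:1801.00313 — 4 statements merged into one kernel-verified Lean document; each statement's English description precedes it below -/
import Mathlib

section
/- Let T be a finite tree rooted at r with nonnegative node weights c, and let ε > 0 with total constraint OPT ≥ c(V(T)) playing the role of an upper bound parameter. Then there exists a set W ⊆ V(T) of size at most 1/ε such that for every node z of T there exists a node u ∈ W ∪ {r} and a path P in T from z to u with c(V(P) \ {u}) ≤ ε·OPT. -/
/-!
Root the tree at `r` by giving each other vertex a neighbour one step closer to `r`, and run
a bottom-up greedy with threshold `t = ε·OPT`: the residual weight of a vertex is its own
weight plus the residual weights of those children whose residual is at most `t`; the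
vertices whose residual exceeds `t` form `W`. Walking up from `z` to the first vertex of
`W ∪ {r}`, every vertex left behind passed its whole residual on to its parent, so the
weight collected before stopping is at most the residual of the last vertex left behind,
which is at most `t`. Summing the defining recursion over all vertices, the residuals passed
on appear on both sides and cancel, so the residuals of `W` add up to at most the total
weight; as each exceeds `t`, a nonempty `W` has `|W|·t < OPT`.
-/

open Finset

/-- A rooted tree given by its parent map; `depth` certifies that iterating `parent`
reaches `root`. -/
structure ParentTree (V : Type*) where
  root : V
  parent : V → V
  depth : V → ℕ
  depth_parent : ∀ v ≠ root, depth v = depth (parent v) + 1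

namespace ParentTree

variable {V : Type*} (T : ParentTree V)

theorem exists_iterate_parent_eq_root (z : V) : ∃ n, T.parent^[n] z = T.root := by
  by_cases hz : z = T.root
  · exact ⟨0, hz⟩
  · obtain ⟨n, hn⟩ := exists_iterate_parent_eq_root (T.parent z)
    exact ⟨n + 1, hn⟩
termination_by T.depth z
decreasing_by have := T.depth_parent z hz; omega

theorem exists_walk_iterate_parent {G : SimpleGraph V}
    (hadj : ∀ v ≠ T.root, G.Adj v (T.parent v)) (k : ℕ) (z : V)
    (hk : ∀ i < k, T.parent^[i] z ≠ T.root) :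
    ∃ P : G.Walk z (T.parent^[k] z), ∀ v ∈ P.support, ∃ i ≤ k, T.parent^[i] z = v := by
  induction k generalizing z with
  | zero => exact ⟨.nil, by simp⟩
  | succ k ih =>
    obtain ⟨P, hP⟩ := ih (T.parent z) fun i hi => hk (i + 1) (by omega)
    have hz : z ≠ T.root := hk 0 k.succ_pos
    refine ⟨(P.cons (hadj z hz)).copy rfl (Function.iterate_succ_apply _ _ _).symm, ?_⟩
    simp only [SimpleGraph.Walk.support_copy, SimpleGraph.Walk.support_cons, List.mem_cons,
      forall_eq_or_imp]
    refine ⟨⟨0, k.zero_le.trans k.le_succ, rfl⟩, fun v hv => ?_⟩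
    obtain ⟨i, hi, rfl⟩ := hP v hv
    exact ⟨i + 1, by omega, rfl⟩

variable [DecidableEq V]

theorem exists_isPath_iterate_parent {G : SimpleGraph V}
    (hadj : ∀ v ≠ T.root, G.Adj v (T.parent v)) {c : V → ℝ} (hc : ∀ v, 0 ≤ c v) (k : ℕ)
    (z : V) (hk : ∀ i < k, T.parent^[i] z ≠ T.root) :
    ∃ P : G.Walk z (T.parent^[k] z), P.IsPath ∧
      ∑ v ∈ P.support.toFinset.erase (T.parent^[k] z), c v ≤
        ∑ i ∈ range k, c (T.parent^[i] z) := by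
  obtain ⟨P, hP⟩ := T.exists_walk_iterate_parent hadj k z hk
  refine ⟨P.bypass, P.bypass_isPath, ?_⟩
  have hsub : P.bypass.support.toFinset.erase (T.parent^[k] z) ⊆
      (range k).image (T.parent^[·] z) := by
    intro v hv
    obtain ⟨hne, hv⟩ := mem_erase.mp hv
    obtain ⟨i, hi, rfl⟩ := hP v (P.support_bypass_subset_support (List.mem_toFinset.mp hv))
    exact mem_image_of_mem _ (mem_range.mpr (hi.lt_of_ne (by rintro rfl; exact hne rfl)))
  calc _ ≤ ∑ v ∈ (range k).image (T.parent^[·] z), c v :=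
        sum_le_sum_of_subset_of_nonneg hsub fun v _ _ => hc v
    _ ≤ _ := sum_image_le_of_nonneg fun v _ => hc v

variable [Fintype V]

def children (v : V) : Finset V := {w ∈ univ.erase T.root | T.parent w = v}

theorem mem_children {v w : V} : w ∈ T.children v ↔ w ≠ T.root ∧ T.parent w = v := by
  simp [children]

theorem card_deeper_lt_of_mem_children {v w : V} (hw : w ∈ T.children v) :
    #{x | T.depth w < T.depth x} < #{x | T.depth v < T.depth x} := by
  obtain ⟨hroot, rfl⟩ := T.mem_children.mp hw
  have := T.depth_parent w hroot
  refine card_lt_card ((ssubset_iff_of_subset fun x => ?_).mpr ⟨w, ?_, ?_⟩) <;> simp <;> omega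

variable (c : V → ℝ) (t : ℝ)

noncomputable def cutoff (x : ℝ) : ℝ := if x ≤ t then x else 0

variable {t} in
theorem cutoff_nonneg {x : ℝ} (hx : 0 ≤ x) : 0 ≤ cutoff t x := by
  unfold cutoff; split_ifs <;> simp [hx]

noncomputable def residual (v : V) : ℝ :=
  c v + ∑ w ∈ (T.children v).attach, cutoff t (residual w.1)
termination_by #{x | T.depth v < T.depth x}
decreasing_by exact T.card_deeper_lt_of_mem_children w.2

theorem residual_eq (v : V) :
    T.residual c t v = c v + ∑ w ∈ T.children v, cutoff t (T.residual c t w) := by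
  rw [residual]
  exact congrArg _ (sum_attach _ fun w => cutoff t (T.residual c t w))

theorem sum_residual :
    ∑ v, T.residual c t v = ∑ v, c v + ∑ w ∈ univ.erase T.root, cutoff t (T.residual c t w) := by
  rw [sum_congr rfl fun v _ => T.residual_eq c t v, sum_add_distrib]
  exact congrArg _ (sum_fiberwise _ _ _)

noncomputable def skeleton : Finset V := {v | t < T.residual c t v}

variable {c}

theorem residual_nonneg (hc : ∀ v, 0 ≤ c v) (v : V) : 0 ≤ T.residual c t v := by
  rw [residual]
  exact add_nonneg (hc v) (sum_nonneg fun w _ => cutoff_nonneg (residual_nonneg hc w.1))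
termination_by #{x | T.depth v < T.depth x}
decreasing_by exact T.card_deeper_lt_of_mem_children w.2

theorem le_residual (hc : ∀ v, 0 ≤ c v) (v : V) : c v ≤ T.residual c t v := by
  rw [residual_eq]
  exact le_add_of_nonneg_right (sum_nonneg fun w _ => cutoff_nonneg (T.residual_nonneg t hc w))

theorem residual_add_le_residual_parent (hc : ∀ v, 0 ≤ c v) {w : V} (hw : w ≠ T.root)
    (hwt : T.residual c t w ≤ t) :
    T.residual c t w + c (T.parent w) ≤ T.residual c t (T.parent w) := by
  rw [T.residual_eq c t (T.parent w), add_comm]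
  gcongr
  have hmem : w ∈ T.children (T.parent w) := T.mem_children.mpr ⟨hw, rfl⟩
  calc T.residual c t w = cutoff t (T.residual c t w) := (if_pos hwt).symm
    _ ≤ _ := single_le_sum (fun x _ => cutoff_nonneg (T.residual_nonneg t hc x)) hmem

theorem sum_iterate_le_residual (hc : ∀ v, 0 ≤ c v) (z : V) (k : ℕ)
    (hk : ∀ i < k, T.parent^[i] z ≠ T.root ∧ T.residual c t (T.parent^[i] z) ≤ t) :
    ∑ i ∈ range (k + 1), c (T.parent^[i] z) ≤ T.residual c t (T.parent^[k] z) := by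
  induction k with
  | zero => simpa using T.le_residual t hc z
  | succ k ih =>
    obtain ⟨hroot, hsmall⟩ := hk k k.lt_succ_self
    rw [sum_range_succ, Function.iterate_succ_apply']
    linarith [ih fun i hi => hk i (by omega),
      T.residual_add_le_residual_parent t hc hroot hsmall]

theorem exists_iterate_mem_skeleton_or_root (hc : ∀ v, 0 ≤ c v) (ht : 0 ≤ t) (z : V) :
    ∃ k, (T.parent^[k] z ∈ T.skeleton c t ∨ T.parent^[k] z = T.root) ∧
      (∀ i < k, T.parent^[i] z ≠ T.root) ∧ ∑ i ∈ range k, c (T.parent^[i] z) ≤ t := by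
  have hstop : ∃ k, t < T.residual c t (T.parent^[k] z) ∨ T.parent^[k] z = T.root :=
    (T.exists_iterate_parent_eq_root z).imp fun _ => Or.inr
  have hbefore : ∀ i < Nat.find hstop,
      T.parent^[i] z ≠ T.root ∧ T.residual c t (T.parent^[i] z) ≤ t := fun i hi => by
    simpa [not_or, and_comm] using Nat.find_min hstop hi
  refine ⟨Nat.find hstop, by simpa [skeleton] using Nat.find_spec hstop,
    fun i hi => (hbefore i hi).1, ?_⟩
  cases hk : Nat.find hstop with
  | zero => simp [ht]
  | succ k =>
    rw [hk] at hbefore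
    exact (T.sum_iterate_le_residual t hc z k fun i hi => hbefore i (by omega)).trans
      (hbefore k k.lt_succ_self).2

theorem card_skeleton_mul_lt_sum (hc : ∀ v, 0 ≤ c v) (hW : (T.skeleton c t).Nonempty) :
    #(T.skeleton c t) * t < ∑ v, c v := by
  have hcut : ∑ w ∈ univ.erase T.root, cutoff t (T.residual c t w) ≤
      ∑ w with ¬ t < T.residual c t w, T.residual c t w := by
    calc _ ≤ ∑ w, cutoff t (T.residual c t w) :=
          sum_le_sum_of_subset_of_nonneg (erase_subset _ _)
            fun w _ _ => cutoff_nonneg (T.residual_nonneg t hc w)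
      _ = _ := by rw [sum_filter]; simp only [cutoff, not_lt]
  have hsplit : ∑ v ∈ T.skeleton c t, T.residual c t v +
      ∑ w with ¬ t < T.residual c t w, T.residual c t w = ∑ v, T.residual c t v :=
    sum_filter_add_sum_filter_not _ _ _
  calc _ = ∑ v ∈ T.skeleton c t, t := by simp
    _ < ∑ v ∈ T.skeleton c t, T.residual c t v :=
        sum_lt_sum_of_nonempty hW fun v hv => (mem_filter.mp hv).2
    _ ≤ ∑ v, c v := by linarith [T.sum_residual c t]

end ParentTree

namespace SimpleGraph

variable {V : Type*} {G : SimpleGraph V}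

theorem Connected.exists_adj_dist_eq_add_one (hG : G.Connected) {v r : V} (hv : v ≠ r) :
    ∃ w, G.Adj v w ∧ G.dist v r = G.dist w r + 1 := by
  obtain ⟨Q, hQ⟩ := hG.exists_walk_length_eq_dist v r
  have hQ' : ¬ Q.Nil := Walk.not_nil_of_ne hv
  refine ⟨Q.snd, Q.adj_snd hQ', le_antisymm ?_ ?_⟩
  · calc G.dist v r ≤ G.dist v Q.snd + G.dist Q.snd r := hG.dist_triangle
      _ = _ := by rw [dist_eq_one_iff_adj.mpr (Q.adj_snd hQ'), add_comm]
  · have := G.dist_le Q.tail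
    have := Q.length_tail_add_one hQ'
    omega

theorem Connected.exists_parentTree (hG : G.Connected) (r : V) :
    ∃ T : ParentTree V, T.root = r ∧ ∀ v ≠ r, G.Adj v (T.parent v) := by
  have : ∀ v, ∃ w, v ≠ r → G.Adj v w ∧ G.dist v r = G.dist w r + 1 := fun v => by
    by_cases hv : v = r
    · exact ⟨v, fun h => absurd hv h⟩
    · exact (hG.exists_adj_dist_eq_add_one hv).imp fun _ hw _ => hw
  choose p hp using this
  exact ⟨⟨r, p, (G.dist · r), fun v hv => (hp v hv).2⟩, rfl, fun v hv => (hp v hv).1⟩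

end SimpleGraph

/-- Existence of an ε-skeleton: in a finite tree `G` rooted at `r` with nonnegative
node weights `c` of total weight at most `OPT`, there is a set `W` of at most `1/ε`
vertices such that every vertex `z` has a path in `G` to some `u ∈ W ∪ {r}` whose
node weight, excluding the weight of `u`, is at most `ε·OPT`. -/
theorem exists_eps_skeleton {V : Type*} [Fintype V] [DecidableEq V]
    (G : SimpleGraph V) (hT : G.IsTree) (r : V)
    (c : V → ℝ) (hc : ∀ v, 0 ≤ c v)
    (OPT ε : ℝ) (hε : 0 < ε) (hOPT : ∑ v, c v ≤ OPT) :
    ∃ W : Finset V, (W.card : ℝ) ≤ 1/ε ∧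
      ∀ z : V, ∃ u : V, (u ∈ W ∨ u = r) ∧ ∃ P : G.Walk z u, P.IsPath ∧
        ∑ v ∈ P.support.toFinset.erase u, c v ≤ ε * OPT := by
  obtain ⟨T, rfl, hadj⟩ := hT.connected.exists_parentTree r
  have hOPT₀ : 0 ≤ OPT := (sum_nonneg fun v _ => hc v).trans hOPT
  refine ⟨T.skeleton c (ε * OPT), ?_, fun z => ?_⟩
  · obtain hW | hW := (T.skeleton c (ε * OPT)).eq_empty_or_nonempty
    · rw [hW, card_empty, Nat.cast_zero]
      positivity
    · have := T.card_skeleton_mul_lt_sum (ε * OPT) hc hW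
      rw [le_div_iff₀ hε]
      by_contra! h
      nlinarith [mul_le_mul_of_nonneg_right h.le hOPT₀]
  · obtain ⟨k, hstop, hroot, hsum⟩ :=
      T.exists_iterate_mem_skeleton_or_root (ε * OPT) hc (by positivity) z
    obtain ⟨P, hP, hPsum⟩ := T.exists_isPath_iterate_parent hadj hc k z hroot
    exact ⟨_, hstop, P, hP, hPsum.trans hsum⟩
end

section
/- Let OPT > 0, λ₁ ≤ λ₂ be reals with λ₂ - λ₁ ≤ ε·OPT/(3n), and let T₁, T₂ be trees with |T₁| < k < |T₂| ≤ n. Suppose dual values DS₁, DS₂ ≥ 0 satisfy c(T_i) + 3λ_i(n - |T_i|) ≤ 3·DS_i for i = 1,2, and that α₁·DS₁ + α₂·DS₂ - λ₂(n-k) ≤ OPT where α₁ = (|T₂|-k)/(|T₂|-|T₁|) and α₂ = (k-|T₁|)/(|T₂|-|T₁|). Then α₁·c(T₁) + α₂·c(T₂) ≤ (3+ε)·OPT. -/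
/-! Averaging the two LMP inequalities with the interpolation weights turns the penalty terms
into `λ₂(n - k)` plus the error `α₁(λ₂ - λ₁)(n - |T₁|) ≤ (λ₂ - λ₁)n ≤ ε·OPT/3`; the dual
feasibility bounds the rest by `OPT`, and the factor 3 turns this into `(3 + ε)·OPT`. -/

section InterpolationWeights

variable {t₁ t₂ k : ℝ}

theorem interpolationWeights_add (h : t₁ < t₂) :
    (t₂ - k) / (t₂ - t₁) + (k - t₁) / (t₂ - t₁) = 1 := by
  field_simp [(sub_pos.2 h).ne']
  ring

theorem interpolationWeights_combination (h : t₁ < t₂) :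
    (t₂ - k) / (t₂ - t₁) * t₁ + (k - t₁) / (t₂ - t₁) * t₂ = k := by
  field_simp [(sub_pos.2 h).ne']
  ring

end InterpolationWeights

theorem lmp_convex_combination_le {ρ n k t₁ t₂ c₁ c₂ DS₁ DS₂ lam₁ lam₂ a₁ a₂ : ℝ}
    (ha₁ : 0 ≤ a₁) (ha₂ : 0 ≤ a₂) (hsum : a₁ + a₂ = 1) (hmean : a₁ * t₁ + a₂ * t₂ = k)
    (hLMP₁ : c₁ + ρ * lam₁ * (n - t₁) ≤ ρ * DS₁) (hLMP₂ : c₂ + ρ * lam₂ * (n - t₂) ≤ ρ * DS₂) :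
    a₁ * c₁ + a₂ * c₂ ≤
      ρ * (a₁ * DS₁ + a₂ * DS₂ - lam₂ * (n - k)) + ρ * (a₁ * (lam₂ - lam₁) * (n - t₁)) := by
  have hpenalty : lam₂ * (n - k) = a₁ * lam₂ * (n - t₁) + a₂ * lam₂ * (n - t₂) := by
    linear_combination lam₂ * hmean - lam₂ * n * hsum
  rw [hpenalty]
  linear_combination a₁ * hLMP₁ + a₂ * hLMP₂

theorem mul_mul_sub_le_mul {a d n t : ℝ} (ha₀ : 0 ≤ a) (ha₁ : a ≤ 1) (hd : 0 ≤ d)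
    (ht : 0 ≤ t) (hn : 0 ≤ n) : a * d * (n - t) ≤ d * n := by
  have h : a * (n - t) ≤ n := by nlinarith
  calc a * d * (n - t) = d * (a * (n - t)) := by ring
    _ ≤ d * n := mul_le_mul_of_nonneg_left h hd

theorem convex_combination_bound_general
    (OPT ε lam1 lam2 n k t1 t2 c1 c2 DS1 DS2 a1 a2 : ℝ)
    (hlam : lam1 ≤ lam2)
    (hgap : lam2 - lam1 ≤ ε * OPT / (3 * n))
    (ht0 : 0 ≤ t1) (h1 : t1 < k) (h2 : k < t2) (hn : 0 < n)
    (ha1 : a1 = (t2 - k) / (t2 - t1)) (ha2 : a2 = (k - t1) / (t2 - t1))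
    (hLMP1 : c1 + 3 * lam1 * (n - t1) ≤ 3 * DS1)
    (hLMP2 : c2 + 3 * lam2 * (n - t2) ≤ 3 * DS2)
    (hdual : a1 * DS1 + a2 * DS2 - lam2 * (n - k) ≤ OPT) :
    a1 * c1 + a2 * c2 ≤ (3 + ε) * OPT := by
  have ht : t1 < t2 := h1.trans h2
  have hsum : a1 + a2 = 1 := ha1 ▸ ha2 ▸ interpolationWeights_add ht
  have ha1_nonneg : 0 ≤ a1 := ha1 ▸ div_nonneg (by linarith) (by linarith)
  have ha2_nonneg : 0 ≤ a2 := ha2 ▸ div_nonneg (by linarith) (by linarith)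
  have hcombine := lmp_convex_combination_le ha1_nonneg ha2_nonneg hsum
    (ha1 ▸ ha2 ▸ interpolationWeights_combination ht) hLMP1 hLMP2
  have herror : a1 * (lam2 - lam1) * (n - t1) ≤ (lam2 - lam1) * n :=
    mul_mul_sub_le_mul ha1_nonneg (by linarith) (sub_nonneg.2 hlam) ht0 hn.le
  have hgap' : (lam2 - lam1) * n * 3 ≤ ε * OPT := by
    rwa [le_div_iff₀ (by positivity), mul_comm 3 n, ← mul_assoc] at hgap
  linarith

/-- Convex combination bound of the Lagrangian relaxation framework with LMP factor 3:
if `λ₂ - λ₁ ≤ ε·OPT/(3n)`, the trees satisfy `c(Tᵢ) + 3λᵢ(n - |Tᵢ|) ≤ 3·DSᵢ`, and the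
combined dual is feasible, `α₁·DS₁ + α₂·DS₂ - λ₂(n-k) ≤ OPT`, then
`α₁·c(T₁) + α₂·c(T₂) ≤ (3+ε)·OPT`. -/
theorem convex_combination_bound
    (OPT ε lam1 lam2 n k t1 t2 c1 c2 DS1 DS2 a1 a2 : ℝ)
    (hOPT : 0 < OPT) (hε : 0 ≤ ε) (hlam : lam1 ≤ lam2)
    (hgap : lam2 - lam1 ≤ ε * OPT / (3 * n))
    (ht0 : 0 ≤ t1) (h1 : t1 < k) (h2 : k < t2) (h3 : t2 ≤ n) (hn : 0 < n)
    (hDS1 : 0 ≤ DS1) (hDS2 : 0 ≤ DS2)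
    (ha1 : a1 = (t2 - k) / (t2 - t1)) (ha2 : a2 = (k - t1) / (t2 - t1))
    (hLMP1 : c1 + 3 * lam1 * (n - t1) ≤ 3 * DS1)
    (hLMP2 : c2 + 3 * lam2 * (n - t2) ≤ 3 * DS2)
    (hdual : a1 * DS1 + a2 * DS2 - lam2 * (n - k) ≤ OPT) :
    a1 * c1 + a2 * c2 ≤ (3 + ε) * OPT :=
  convex_combination_bound_general OPT ε lam1 lam2 n k t1 t2 c1 c2 DS1 DS2 a1 a2 hlam hgap ht0 h1 h2
    hn ha1 ha2 hLMP1 hLMP2 hdual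
end

section
/- Let OPT > 0, α = α₂ ∈ (0,1), β = c(T₁)/OPT ∈ [0,3], ε, ε₂ > 0, and suppose (1-α)·c(T₁) + α·c(T₂) ≤ (3+ε)·OPT. Define SOL₁-cost = c(T₁) + (1+ε₂)·α·c(T₂) + ε·C·log(1/ε₂)·OPT for some constant C, and SOL₂-cost = c(T₂). Then min(SOL₁-cost, SOL₂-cost) ≤ max over α ∈ (0,1), β ∈ [0,3] of min{ 3(1+ε₂+ε) + αβ + ε·C·log(1/ε₂), (3(1+ε) - (1-α)β)/α }·OPT. In particular, taking ε₂ = ε, this is (4 + O(√ε + ε·log(1/ε)))·OPT = (4 + O(√ε))·OPT for ε ≤ 1. -/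
/-
The minimum of the two costs is at most any convex combination of them. With weights
proportional to `1 - α` and `α²`, the combination `(1 - α)·SOL₁ + α²·SOL₂` is the left side of
the Lagrangian constraint plus error terms of order `ε`. Since `1 - α + α² ≥ 3/4`, the cheaper
solution costs at most `4/3 · (3 + O(ε)) · OPT`, and `ε·log(1/ε) ≤ 2√ε` turns all error terms
into `O(√ε)`.
-/

open Real

theorem mul_min_le_add_mul {p q : ℝ} (hp : 0 ≤ p) (hq : 0 ≤ q) (a b : ℝ) :
    (p + q) * min a b ≤ p * a + q * b := by
  nlinarith [min_le_left a b, min_le_right a b]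

theorem Real.mul_log_one_div_le_two_sqrt {ε : ℝ} (hε : 0 < ε) :
    ε * log (1 / ε) ≤ 2 * √ε := by
  set s := √ε
  have hs : 0 < s := sqrt_pos.2 hε
  have hε_eq : ε = s ^ 2 := (sq_sqrt hε.le).symm
  have hlog : log (1 / ε) = 2 * log (1 / s) := by
    rw [hε_eq, ← one_div_pow, log_pow]
    norm_num
  have hlog_le : log (1 / s) ≤ 1 / s - 1 := log_le_sub_one_of_pos (one_div_pos.2 hs)
  calc ε * log (1 / ε) = 2 * s ^ 2 * log (1 / s) := by rw [hlog, hε_eq]; ring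
    _ ≤ 2 * s ^ 2 * (1 / s - 1) := by gcongr
    _ = 2 * s - 2 * s ^ 2 := by field_simp
    _ ≤ 2 * s := by nlinarith

section CheaperSolution

variable {α ε c₁ c₂ B E : ℝ}

theorem cheaper_solution_mul_le (hα₀ : 0 ≤ α) (hα₁ : α ≤ 1) (hc₁ : 0 ≤ c₁) (hc₂ : 0 ≤ c₂)
    (hε : 0 ≤ ε) (hE : 0 ≤ E) (hB : (1 - α) * c₁ + α * c₂ ≤ B) :
    (1 - α + α ^ 2) * min (c₁ + (1 + ε) * α * c₂ + E) c₂ ≤ (1 + ε) * B + E := by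
  have hαc₂ : α * c₂ ≤ B := by nlinarith
  have herr : (1 - α) * (ε * (α * c₂)) ≤ ε * B := by
    nlinarith [mul_le_mul_of_nonneg_left hαc₂ hε, mul_nonneg hα₀ (mul_nonneg hε (mul_nonneg hα₀ hc₂))]
  calc (1 - α + α ^ 2) * min (c₁ + (1 + ε) * α * c₂ + E) c₂
      ≤ (1 - α) * (c₁ + (1 + ε) * α * c₂ + E) + α ^ 2 * c₂ :=
        mul_min_le_add_mul (by linarith) (sq_nonneg α) _ _
    _ = ((1 - α) * c₁ + α * c₂) + (1 - α) * (ε * (α * c₂)) + (1 - α) * E := by ring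
    _ ≤ B + ε * B + E := by nlinarith
    _ = (1 + ε) * B + E := by ring

theorem cheaper_solution_le (hα₀ : 0 ≤ α) (hα₁ : α ≤ 1) (hc₁ : 0 ≤ c₁) (hc₂ : 0 ≤ c₂)
    (hε : 0 ≤ ε) (hE : 0 ≤ E) (hB : (1 - α) * c₁ + α * c₂ ≤ B) :
    min (c₁ + (1 + ε) * α * c₂ + E) c₂ ≤ 4 / 3 * ((1 + ε) * B + E) := by
  have hmin : 0 ≤ min (c₁ + (1 + ε) * α * c₂ + E) c₂ := le_min (by positivity) hc₂
  have hweight : 3 / 4 ≤ 1 - α + α ^ 2 := by nlinarith [sq_nonneg (α - 1 / 2)]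
  nlinarith [cheaper_solution_mul_le hα₀ hα₁ hc₁ hc₂ hε hE hB]

end CheaperSolution

/-- Cheaper of the two solutions: with `α ∈ (0,1)`, `β = c(T₁)/OPT ∈ [0,3]`,
`(1-α)c(T₁) + α·c(T₂) ≤ (3+ε)OPT`, and taking `ε₂ = ε`, the cheaper of
`SOL₁ = c(T₁) + (1+ε₂)·α·c(T₂) + ε·C·log(1/ε₂)·OPT` and `SOL₂ = c(T₂)` costs at
most `(4 + O(√ε + ε·log(1/ε)))·OPT`, which is `(4 + O(√ε))·OPT` for `ε ≤ 1`. -/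
theorem cheaper_solution_bound :
    ∀ C : ℝ, 0 ≤ C → ∃ C' : ℝ, 0 < C' ∧
      ∀ OPT c1 c2 α ε : ℝ, 0 < OPT → 0 < α → α < 1 →
        0 ≤ c1 → c1 ≤ 3 * OPT → 0 ≤ c2 → 0 < ε → ε ≤ 1 →
        (1 - α) * c1 + α * c2 ≤ (3 + ε) * OPT →
        min (c1 + (1 + ε) * α * c2 + ε * C * Real.log (1 / ε) * OPT) c2
          ≤ (4 + C' * (Real.sqrt ε + ε * Real.log (1 / ε))) * OPT ∧
        min (c1 + (1 + ε) * α * c2 + ε * C * Real.log (1 / ε) * OPT) c2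
          ≤ (4 + C' * Real.sqrt ε) * OPT := by
  intro C hC
  refine ⟨3 * C + 7, by positivity, ?_⟩
  intro OPT c1 c2 α ε hOPT hα₀ hα₁ hc₁ _ hc₂ hε₀ hε₁ hB
  have hlog : 0 ≤ log (1 / ε) := log_nonneg (one_le_one_div hε₀ hε₁)
  have hε_le : ε ≤ √ε := le_sqrt_self_iff.2 hε₁
  have hεlog := mul_log_one_div_le_two_sqrt hε₀
  have hcheap := cheaper_solution_le hα₀.le hα₁.le hc₁ hc₂ hε₀.le
    (E := ε * C * log (1 / ε) * OPT) (by positivity) hB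
  have hfactor : 4 / 3 * ((1 + ε) * (3 + ε) + C * (ε * log (1 / ε))) ≤ 4 + (3 * C + 7) * √ε := by
    nlinarith [mul_le_mul_of_nonneg_left hεlog hC, mul_nonneg hC (sqrt_nonneg ε)]
  have hsqrt : min (c1 + (1 + ε) * α * c2 + ε * C * log (1 / ε) * OPT) c2
      ≤ (4 + (3 * C + 7) * √ε) * OPT := by
    calc _ ≤ 4 / 3 * ((1 + ε) * ((3 + ε) * OPT) + ε * C * log (1 / ε) * OPT) := hcheap
      _ = 4 / 3 * ((1 + ε) * (3 + ε) + C * (ε * log (1 / ε))) * OPT := by ring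
      _ ≤ _ := mul_le_mul_of_nonneg_right hfactor hOPT.le
  refine ⟨hsqrt.trans (mul_le_mul_of_nonneg_right ?_ hOPT.le), hsqrt⟩
  have : 0 ≤ (3 * C + 7) * (ε * log (1 / ε)) := by positivity
  nlinarith
end

section
/- In the star-reduction procedure on a tree: if the iterated process of removing or contracting one side of an edge terminates, the resulting graph H is a star, every leaf of H has super-cardinality at most q, and if H has at least 2 leaves then every leaf of H is cost-effective (average cost at most the original ratio ρ). -/
/-!
Every edge `uv` of the tree splits it into two sides, and since the whole vertex set is
cost-effective, so is at least one side. At termination that side is a single vertex of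
super-cardinality less than `q`, i.e. a cost-effective leaf. A tree in which every edge has a leaf
endpoint is a star. When the star has at least two leaves, its center is not a leaf, so for each
edge (center, leaf) the cost-effective leaf endpoint is the leaf itself.
-/

open Finset

namespace SimpleGraph

variable {V : Type*} (H : SimpleGraph V)

def IsLeafToward (x y : V) : Prop := ∀ w, H.Adj x w → w = y

def IsOnlyEdgeLeaving (X : Finset V) (u v : V) : Prop :=
  ∀ a ∈ X, ∀ b ∉ X, H.Adj a b → a = u ∧ b = v

variable {H}

lemma IsOnlyEdgeLeaving.compl [Fintype V] [DecidableEq V] {X : Finset V} {u v : V}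
    (h : H.IsOnlyEdgeLeaving X u v) : H.IsOnlyEdgeLeaving Xᶜ v u := by
  intro a ha b hb hab
  rw [mem_compl] at ha
  rw [notMem_compl] at hb
  exact (h b hb a ha hab.symm).symm

lemma IsOnlyEdgeLeaving.isLeafToward {u v : V} (h : H.IsOnlyEdgeLeaving {u} u v) :
    H.IsLeafToward u v :=
  fun w huw => (h u (mem_singleton_self u) w (by simpa using huw.ne') huw).2

lemma IsAcyclic.exists_isOnlyEdgeLeaving [Fintype V] (hH : H.IsAcyclic) {u v : V}
    (huv : H.Adj u v) : ∃ X : Finset V, u ∈ X ∧ v ∉ X ∧ H.IsOnlyEdgeLeaving X u v := by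
  classical
  set G := H.deleteEdges {s(u, v)}
  have hv : ¬ G.Reachable u v := isAcyclic_iff_forall_adj_isBridge.1 hH huv
  refine ⟨univ.filter (G.Reachable u), by simp, by simpa using hv, ?_⟩
  intro a ha b hb hab
  simp only [mem_filter, mem_univ, true_and] at ha hb
  by_contra hne
  have hGab : G.Adj a b := by
    refine (deleteEdges_adj ..).2 ⟨hab, fun hmem => ?_⟩
    rcases Sym2.eq_iff.1 (Set.mem_singleton_iff.1 hmem) with h | ⟨rfl, -⟩
    · exact hne h
    · exact hv ha
  exact hb (ha.trans hGab.reachable)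

lemma adj_of_forall_neighbor_isLeafToward (hH : H.Preconnected) {ctr : V}
    (hleaf : ∀ y, H.Adj ctr y → H.IsLeafToward y ctr) {x : V} (hx : x ≠ ctr) : H.Adj ctr x := by
  suffices ∀ x, H.Walk x ctr → x = ctr ∨ H.Adj ctr x from
    (this x (hH x ctr).some).resolve_left hx
  intro x p
  clear hx
  induction p with
  | nil => exact .inl rfl
  | @cons x y _ hxy _ ih =>
    rcases ih hleaf with rfl | hy
    · exact .inr hxy.symm
    · exact .inl (hleaf y hy x hxy.symm)

lemma exists_center_of_forall_adj_isLeafToward [Nonempty V] (hH : H.Preconnected)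
    (hleaf : ∀ u v, H.Adj u v → H.IsLeafToward u v ∨ H.IsLeafToward v u) :
    ∃ ctr : V, ∀ u v, H.Adj u v → u = ctr ∨ v = ctr := by
  by_cases hE : ∃ a b, H.Adj a b
  · obtain ⟨a, b, hab⟩ := hE
    wlog ha : H.IsLeafToward a b generalizing a b
    · exact this b a hab.symm ((hleaf a b hab).resolve_left ha)
    -- every neighbor `y` of `b` is a leaf: otherwise `b` hangs from `y`, forcing `y = a`
    have hb : ∀ y, H.Adj b y → H.IsLeafToward y b := fun y hy =>
      (hleaf b y hy).elim (fun hby => hby a hab.symm ▸ ha) id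
    refine ⟨b, fun u v huv => or_iff_not_imp_left.2 fun hu => ?_⟩
    exact hb u (adj_of_forall_neighbor_isLeafToward hH hb hu) v huv
  · push Not at hE
    exact ⟨Classical.arbitrary V, fun u v huv => absurd huv (hE u v)⟩

lemma adj_center_of_ne (hH : H.Preconnected) {ctr : V}
    (hstar : ∀ u v, H.Adj u v → u = ctr ∨ v = ctr) {v : V} (hv : v ≠ ctr) : H.Adj v ctr := by
  obtain ⟨p⟩ := hH v ctr
  cases p with
  | nil => exact absurd rfl hv
  | cons h _ => exact (hstar _ _ h).resolve_left hv ▸ h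

end SimpleGraph

open SimpleGraph

section StarReduction

variable {V : Type*}

def CostEffective (c : V → ℝ) (s : V → ℕ) (ρ : ℝ) (X : Finset V) : Prop :=
  ∑ w ∈ X, c w ≤ ρ * ∑ w ∈ X, (s w : ℝ)

def NoReductionStep (H : SimpleGraph V) (c : V → ℝ) (s : V → ℕ) (ρ : ℝ) (q : ℕ) : Prop :=
  ∀ u v : V, ∀ X : Finset V, H.Adj u v → u ∈ X → v ∉ X → H.IsOnlyEdgeLeaving X u v →
    CostEffective c s ρ X → X.card = 1 ∧ ∑ w ∈ X, s w < q

def IsEffectiveLeaf (H : SimpleGraph V) (c : V → ℝ) (s : V → ℕ) (ρ : ℝ) (q : ℕ) (x y : V) :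
    Prop :=
  H.IsLeafToward x y ∧ s x < q ∧ c x ≤ ρ * s x

variable {H : SimpleGraph V} {c : V → ℝ} {s : V → ℕ} {ρ : ℝ} {q : ℕ}

lemma CostEffective.or_compl [Fintype V] [DecidableEq V] (h : CostEffective c s ρ univ)
    (X : Finset V) : CostEffective c s ρ X ∨ CostEffective c s ρ Xᶜ := by
  unfold CostEffective at *
  rw [← sum_add_sum_compl X c, ← sum_add_sum_compl X, mul_add] at h
  by_contra! hX
  linarith [hX.1, hX.2]

lemma NoReductionStep.isEffectiveLeaf (hterm : NoReductionStep H c s ρ q) {u v : V}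
    {X : Finset V} (huv : H.Adj u v) (hu : u ∈ X) (hv : v ∉ X) (hX : H.IsOnlyEdgeLeaving X u v)
    (heff : CostEffective c s ρ X) : IsEffectiveLeaf H c s ρ q u v := by
  obtain ⟨hcard, hq⟩ := hterm u v X huv hu hv hX heff
  obtain rfl : X = {u} := by
    obtain ⟨a, rfl⟩ := card_eq_one.1 hcard
    rw [mem_singleton.1 hu]
  exact ⟨hX.isLeafToward, by simpa using hq, by simpa [CostEffective] using heff⟩

lemma NoReductionStep.isEffectiveLeaf_or [Fintype V] [DecidableEq V]
    (hterm : NoReductionStep H c s ρ q) (hH : H.IsAcyclic) (hall : CostEffective c s ρ univ)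
    {u v : V} (huv : H.Adj u v) :
    IsEffectiveLeaf H c s ρ q u v ∨ IsEffectiveLeaf H c s ρ q v u := by
  obtain ⟨X, hu, hv, hX⟩ := hH.exists_isOnlyEdgeLeaving huv
  refine (hall.or_compl X).imp (hterm.isEffectiveLeaf huv hu hv hX) fun heff => ?_
  exact hterm.isEffectiveLeaf huv.symm (mem_compl.2 hv) (notMem_compl.2 hu) hX.compl heff

end StarReduction

/-- Invariants of the star-reduction procedure at termination. `H` is a tree with
node costs `c` and super-cardinalities `s`; a vertex set `X` is cost-effective if
`c(X) ≤ ρ · s(X)`. Removing an edge `uv` splits the tree into the component `X` of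
`u` and its complement (characterised by: `u ∈ X`, `v ∉ X`, and `uv` is the only
edge leaving `X`). At termination no step applies: every cost-effective side of an
edge is a single vertex (otherwise it would be contracted) of super-cardinality
less than `q` (otherwise the other side would be deleted). The whole vertex set is
cost-effective. Then `H` is a star with some center `ctr`, and if `H` has at least
two leaves, every leaf has super-cardinality at most `q` and is cost-effective. -/
theorem star_reduction_terminal {V : Type*} [Fintype V] [DecidableEq V] [Nonempty V]
    (H : SimpleGraph V) (hH : H.IsTree)
    (c : V → ℝ) (s : V → ℕ) (ρ : ℝ) (q : ℕ)
    (hEffAll : ∑ v, c v ≤ ρ * ∑ v, (s v : ℝ))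
    (hTerm : ∀ u v : V, ∀ X : Finset V, H.Adj u v → u ∈ X → v ∉ X →
      (∀ a ∈ X, ∀ b ∉ X, H.Adj a b → a = u ∧ b = v) →
      (∑ w ∈ X, c w ≤ ρ * ∑ w ∈ X, (s w : ℝ)) →
      X.card = 1 ∧ ∑ w ∈ X, s w < q) :
    ∃ ctr : V,
      (∀ u v : V, H.Adj u v → u = ctr ∨ v = ctr) ∧
      (2 ≤ (Finset.univ.filter (· ≠ ctr)).card →
        ∀ v : V, v ≠ ctr → s v ≤ q ∧ c v ≤ ρ * s v) := by
  have hconn := hH.connected.preconnected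
  have hleaf : ∀ u v, H.Adj u v →
      IsEffectiveLeaf H c s ρ q u v ∨ IsEffectiveLeaf H c s ρ q v u :=
    fun _ _ => NoReductionStep.isEffectiveLeaf_or hTerm hH.isAcyclic hEffAll
  obtain ⟨ctr, hstar⟩ := exists_center_of_forall_adj_isLeafToward hconn
    fun u v huv => (hleaf u v huv).imp And.left And.left
  refine ⟨ctr, hstar, fun htwo v hv => ?_⟩
  rcases hleaf v ctr (adj_center_of_ne hconn hstar hv) with ⟨-, hq, heff⟩ | ⟨hctr, -⟩
  · exact ⟨hq.le, heff⟩
  · have hsub : univ.filter (· ≠ ctr) ⊆ {v} := fun w hw =>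
      mem_singleton.2 (hctr w (adj_center_of_ne hconn hstar (mem_filter.1 hw).2).symm)
    have := card_le_card hsub
    rw [card_singleton] at this
    omega
end
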